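/- Let α_1, α_2 ∈ (1,2), let n_1, n_2 ≥ 1 be integers, let c_x, c_y > 0, set N = n_1 n_2, let A = c_x (I_{n_2} ⊗ G_{n_1}^{(α_1)}) + c_y (G_{n_2}^{(α_2)} ⊗ I_{n_1}), and let D be an N×N diagonal matrix with nonnegative diagonal entries. Then the matrix M = I_N - A + D is symmetric positive definite and satisfies, for every i ∈ {1,…,N}, ∑_{j ≠ i} |[M]_{ij}| ≤ [M]_{ii} - 1. -/

import Mathlib

/-- Grünwald–Letnikov coefficients: `g α 0 = 1`,
`g α l = (1 - (α+1)/l) * g α (l-1)` for `l ≥ 1`. -/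
noncomputable def g (α : ℝ) : ℕ → ℝ
  | 0 => 1
  | l + 1 => (1 - (α + 1) / ((l : ℝ) + 1)) * g α l


/-- First column (Toeplitz symbol) of `G_n^{(α)}`: entry at distance `d` is
`2 g₁` if `d = 0`, `g₀ + g₂` if `d = 1`, and `g_{d+1}` if `d ≥ 2`. -/
noncomputable def gSymb (α : ℝ) : ℕ → ℝ
  | 0 => 2 * g α 1
  | 1 => g α 0 + g α 2
  | d + 2 => g α (d + 3)

/-- The symmetric Toeplitz matrix `G_n^{(α)}`. -/
noncomputable def Gmat (α : ℝ) (n : ℕ) : Matrix (Fin n) (Fin n) ℝ :=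
  Matrix.of fun i j => gSymb α (((i : ℤ) - (j : ℤ)).natAbs)

open Matrix Kronecker

/-- `A = c_x (I_{n₂} ⊗ G_{n₁}^{(α₁)}) + c_y (G_{n₂}^{(α₂)} ⊗ I_{n₁})`. -/
noncomputable def Amat (α₁ α₂ : ℝ) (n₁ n₂ : ℕ) (cx cy : ℝ) :
    Matrix (Fin n₂ × Fin n₁) (Fin n₂ × Fin n₁) ℝ :=
  cx • ((1 : Matrix (Fin n₂) (Fin n₂) ℝ) ⊗ₖ Gmat α₁ n₁) +
    cy • (Gmat α₂ n₂ ⊗ₖ (1 : Matrix (Fin n₁) (Fin n₁) ℝ))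

/-! The partial sums `Sₘ = ∑_{l ≤ m} gₗ` satisfy `(m + 1) Sₘ₊₁ = (m + 1 - α) Sₘ`, because
`(m + 1) gₘ₊₁ = -α Sₘ`. For `1 < α < 2` this makes `Sₘ < 0` for `m ≥ 1` and hence `gₗ > 0` for
`l ≥ 2`. So `G_n^{(α)}` has diagonal `-2α`, nonnegative off-diagonal entries, and each of the two
one-sided off-diagonal sums of a row is empty or equal to `S_k - g₁ < α`: its row sums are `≤ 0`.
The same then holds for `A`, so `M = I - A + D` is a symmetric matrix whose diagonal exceeds the
absolute off-diagonal row sums by at least `1`, and by Gershgorin's theorem all its eigenvalues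
are `≥ 1`. -/

open Finset

section GrunwaldLetnikov

variable {α : ℝ}

lemma g_one (α : ℝ) : g α 1 = -α := by simp [g]

lemma succ_mul_g_succ (α : ℝ) (m : ℕ) :
    ((m : ℝ) + 1) * g α (m + 1) = -α * ∑ l ∈ range (m + 1), g α l := by
  induction m with
  | zero => simp [g]
  | succ m ih =>
    rw [g, sum_range_succ, mul_add, ← ih]
    push_cast
    field_simp
    ring

lemma sum_range_g_neg (h1 : 1 < α) (h2 : α < 2) (m : ℕ) : ∑ l ∈ range (m + 2), g α l < 0 := by
  induction m with
  | zero => simp [sum_range_succ, g]; linarith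
  | succ m ih =>
    have hg := succ_mul_g_succ α (m + 1)
    push_cast at hg
    have hrec : ((m : ℝ) + 2) * ∑ l ∈ range (m + 3), g α l
        = ((m : ℝ) + 2 - α) * ∑ l ∈ range (m + 2), g α l := by
      rw [sum_range_succ]; linarith
    nlinarith [mul_neg_of_pos_of_neg (show (0 : ℝ) < m + 2 - α by linarith) ih]

lemma g_pos (h1 : 1 < α) (h2 : α < 2) (m : ℕ) : 0 < g α (m + 2) := by
  have hg := succ_mul_g_succ α (m + 1)
  push_cast at hg
  nlinarith [sum_range_g_neg h1 h2 m]

lemma gSymb_zero (α : ℝ) : gSymb α 0 = -(2 * α) := by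
  rw [gSymb, g_one]; ring

lemma gSymb_succ_nonneg (h1 : 1 < α) (h2 : α < 2) : ∀ e : ℕ, 0 ≤ gSymb α (e + 1)
  | 0 => by rw [gSymb, g]; linarith [g_pos h1 h2 0]
  | e + 1 => (g_pos h1 h2 (e + 1)).le

lemma sum_range_gSymb_succ (α : ℝ) (m : ℕ) :
    ∑ e ∈ range (m + 1), gSymb α (e + 1) = ∑ l ∈ range (m + 3), g α l + α := by
  induction m with
  | zero => simp [sum_range_succ, gSymb, g_one]; ring
  | succ m ih => rw [sum_range_succ, ih, sum_range_succ _ (m + 3), add_right_comm]; rfl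

lemma sum_range_gSymb_succ_le (h1 : 1 < α) (h2 : α < 2) :
    ∀ m : ℕ, ∑ e ∈ range m, gSymb α (e + 1) ≤ α
  | 0 => by simp; linarith
  | m + 1 => by rw [sum_range_gSymb_succ]; linarith [sum_range_g_neg h1 h2 (m + 1)]

end GrunwaldLetnikov

lemma sum_range_natAbs_sub {M : Type*} [AddCommMonoid M] (f : ℕ → M) {n k : ℕ} (hk : k < n) :
    ∑ j ∈ range n, f ((k : ℤ) - j).natAbs
      = f 0 + ∑ e ∈ range k, f (e + 1) + ∑ e ∈ range (n - 1 - k), f (e + 1) := by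
  obtain ⟨r, rfl⟩ : ∃ r, n = k + 1 + r := ⟨n - 1 - k, by omega⟩
  rw [sum_range_add, sum_range_succ, ← sum_range_reflect, show k + 1 + r - 1 - k = r by omega,
    add_comm (∑ _ ∈ _, _) (f _)]
  congr 2
  · simp
  · exact sum_congr rfl fun j hj => by rw [mem_range] at hj; congr 1; omega
  · exact funext fun j => by congr 1; omega

section ToeplitzMatrix

variable {α : ℝ}

lemma Gmat_apply_nonneg (h1 : 1 < α) (h2 : α < 2) {n : ℕ} {i j : Fin n} (hij : i ≠ j) :
    0 ≤ Gmat α n i j := by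
  obtain ⟨e, he⟩ : ∃ e, ((i : ℤ) - j).natAbs = e + 1 :=
    ⟨((i : ℤ) - j).natAbs - 1, by have := Fin.val_ne_of_ne hij; omega⟩
  rw [Gmat, of_apply, he]
  exact gSymb_succ_nonneg h1 h2 e

lemma sum_Gmat_row_nonpos (h1 : 1 < α) (h2 : α < 2) {n : ℕ} (i : Fin n) :
    ∑ j, Gmat α n i j ≤ 0 := by
  simp only [Gmat, of_apply]
  rw [Fin.sum_univ_eq_sum_range (fun j => gSymb α ((i : ℤ) - j).natAbs),
    sum_range_natAbs_sub _ i.isLt, gSymb_zero]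
  linarith [sum_range_gSymb_succ_le h1 h2 i, sum_range_gSymb_succ_le h1 h2 (n - 1 - i)]

lemma Gmat_isSymm (α : ℝ) (n : ℕ) : (Gmat α n).IsSymm :=
  IsSymm.ext fun i j => by simp only [Gmat, of_apply]; congr 1; omega

end ToeplitzMatrix

section Kronecker

variable {R l m n : Type*}

lemma Matrix.IsSymm.kronecker [CommMagma R] {A : Matrix l l R} {B : Matrix n n R}
    (hA : A.IsSymm) (hB : B.IsSymm) : (A ⊗ₖ B).IsSymm := by
  rw [IsSymm, ← kroneckerMap_transpose, hA.eq, hB.eq]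

lemma Matrix.sum_one_kronecker_apply [Fintype m] [Fintype n] [DecidableEq m] [NonAssocSemiring R]
    (B : Matrix l n R) (i : m × l) : ∑ j, ((1 : Matrix m m R) ⊗ₖ B) i j = ∑ b, B i.2 b := by
  simp [Fintype.sum_prod_type, kroneckerMap_apply, one_apply]

lemma Matrix.sum_kronecker_one_apply [Fintype m] [Fintype n] [DecidableEq n] [NonAssocSemiring R]
    (A : Matrix l m R) (i : l × n) : ∑ j, (A ⊗ₖ (1 : Matrix n n R)) i j = ∑ a, A i.1 a := by
  simp [Fintype.sum_prod_type, kroneckerMap_apply, one_apply]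

end Kronecker

lemma Amat_isSymm (α₁ α₂ : ℝ) (n₁ n₂ : ℕ) (cx cy : ℝ) : (Amat α₁ α₂ n₁ n₂ cx cy).IsSymm :=
  ((isSymm_one.kronecker (Gmat_isSymm α₁ n₁)).smul cx).add
    (((Gmat_isSymm α₂ n₂).kronecker isSymm_one).smul cy)

section Amat

variable {α₁ α₂ cx cy : ℝ} {n₁ n₂ : ℕ}

lemma Amat_apply_nonneg (hα₁ : 1 < α₁ ∧ α₁ < 2) (hα₂ : 1 < α₂ ∧ α₂ < 2) (hcx : 0 ≤ cx)
    (hcy : 0 ≤ cy) {i j : Fin n₂ × Fin n₁} (hij : i ≠ j) : 0 ≤ Amat α₁ α₂ n₁ n₂ cx cy i j := by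
  simp only [Amat, Matrix.add_apply, Matrix.smul_apply, kroneckerMap_apply, one_apply, smul_eq_mul]
  by_cases h₁ : i.1 = j.1
  · have h₂ : i.2 ≠ j.2 := fun h₂ => hij (Prod.ext h₁ h₂)
    simpa [h₁, h₂] using mul_nonneg hcx (Gmat_apply_nonneg hα₁.1 hα₁.2 h₂)
  · by_cases h₂ : i.2 = j.2
    · simpa [h₁, h₂] using mul_nonneg hcy (Gmat_apply_nonneg hα₂.1 hα₂.2 h₁)
    · simp [h₁, h₂]

lemma sum_Amat_row_nonpos (hα₁ : 1 < α₁ ∧ α₁ < 2) (hα₂ : 1 < α₂ ∧ α₂ < 2) (hcx : 0 ≤ cx)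
    (hcy : 0 ≤ cy) (i : Fin n₂ × Fin n₁) : ∑ j, Amat α₁ α₂ n₁ n₂ cx cy i j ≤ 0 := by
  simp only [Amat, Matrix.add_apply, Matrix.smul_apply, smul_eq_mul, sum_add_distrib, ← mul_sum,
    sum_one_kronecker_apply, sum_kronecker_one_apply]
  exact add_nonpos (mul_nonpos_of_nonneg_of_nonpos hcx (sum_Gmat_row_nonpos hα₁.1 hα₁.2 _))
    (mul_nonpos_of_nonneg_of_nonpos hcy (sum_Gmat_row_nonpos hα₂.1 hα₂.2 _))

end Amat

section DiagonalDominance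

variable {ι : Type*} [Fintype ι] [DecidableEq ι]

lemma sum_abs_one_sub_add_diagonal_le {A : Matrix ι ι ℝ} {d : ι → ℝ}
    (hoff : ∀ i j, i ≠ j → 0 ≤ A i j) (hrow : ∀ i, ∑ j, A i j ≤ 0) (hd : ∀ i, 0 ≤ d i) (i : ι) :
    ∑ j ∈ univ.erase i, |(1 - A + diagonal d) i j| ≤ (1 - A + diagonal d) i i - 1 := by
  have hoffM : ∀ j ∈ univ.erase i, |(1 - A + diagonal d) i j| = A i j := fun j hj => by
    have hij := (ne_of_mem_erase hj).symm
    rw [Matrix.add_apply, Matrix.sub_apply, one_apply_ne hij, diagonal_apply_ne _ hij, zero_sub,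
      add_zero, abs_neg, abs_of_nonneg (hoff i j hij)]
  rw [sum_congr rfl hoffM, sum_erase_eq_sub (mem_univ i)]
  simp only [Matrix.add_apply, Matrix.sub_apply, one_apply_eq, diagonal_apply_eq]
  linarith [hrow i, hd i]

lemma Matrix.IsHermitian.posDef_of_sum_abs_lt {M : Matrix ι ι ℝ} (hM : M.IsHermitian)
    (h : ∀ i, ∑ j ∈ univ.erase i, |M i j| < M i i) : M.PosDef := by
  refine hM.posDef_iff_eigenvalues_pos.2 fun i => ?_
  have hμ : Module.End.HasEigenvalue (toLin' M) (hM.eigenvalues i) :=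
    .of_mem_spectrum (by rw [spectrum_toLin']; exact hM.eigenvalues_mem_spectrum_real i)
  obtain ⟨k, hk⟩ := eigenvalue_mem_ball hμ
  rw [Metric.mem_closedBall, Real.dist_eq] at hk
  simp only [Real.norm_eq_abs] at hk
  linarith [h k, (abs_le.1 hk).1]

end DiagonalDominance

theorem stmt7_general (α₁ α₂ : ℝ) (hα₁ : 1 < α₁ ∧ α₁ < 2) (hα₂ : 1 < α₂ ∧ α₂ < 2)
    (n₁ n₂ : ℕ) (cx cy : ℝ) (hcx : 0 < cx) (hcy : 0 < cy)
    (d : Fin n₂ × Fin n₁ → ℝ) (hd : ∀ i, 0 ≤ d i)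
    (M : Matrix (Fin n₂ × Fin n₁) (Fin n₂ × Fin n₁) ℝ)
    (hM : M = 1 - Amat α₁ α₂ n₁ n₂ cx cy + Matrix.diagonal d) :
    M.PosDef ∧ ∀ i, ∑ j ∈ Finset.univ \ {i}, |M i j| ≤ M i i - 1 := by
  have hrow := sum_abs_one_sub_add_diagonal_le
    (fun i j => Amat_apply_nonneg hα₁ hα₂ hcx.le hcy.le)
    (sum_Amat_row_nonpos hα₁ hα₂ hcx.le hcy.le) hd
  subst hM
  have hsymm := ((isSymm_one.sub (Amat_isSymm α₁ α₂ n₁ n₂ cx cy)).add (isSymm_diagonal d))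
  refine ⟨(isHermitian_iff_isSymm.2 hsymm).posDef_of_sum_abs_lt fun i => ?_, fun i => ?_⟩
  · linarith [hrow i]
  · rw [sdiff_singleton_eq_erase]
    exact hrow i

theorem stmt7 (α₁ α₂ : ℝ) (hα₁ : 1 < α₁ ∧ α₁ < 2) (hα₂ : 1 < α₂ ∧ α₂ < 2)
    (n₁ n₂ : ℕ) (hn₁ : 1 ≤ n₁) (hn₂ : 1 ≤ n₂) (cx cy : ℝ) (hcx : 0 < cx) (hcy : 0 < cy)
    (d : Fin n₂ × Fin n₁ → ℝ) (hd : ∀ i, 0 ≤ d i)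
    (M : Matrix (Fin n₂ × Fin n₁) (Fin n₂ × Fin n₁) ℝ)
    (hM : M = 1 - Amat α₁ α₂ n₁ n₂ cx cy + Matrix.diagonal d) :
    M.PosDef ∧ ∀ i, ∑ j ∈ Finset.univ \ {i}, |M i j| ≤ M i i - 1 :=
  stmt7_general α₁ α₂ hα₁ hα₂ n₁ n₂ cx cy hcx hcy d hd M hM
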